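/- arXiv:2010.00109 — 4 statements merged into one kernel-verified Lean document; each statement's English description precedes it below -/
import Mathlib

section
/- For any real numbers b, c with b^2 + 4c > 0 and any integer k ≥ 0, the sum over i from 0 to ⌊k/2⌋ of C(k-i, i) · b^(k-2i) · c^i equals (1/√(b²+4c)) · ( ((b + √(b²+4c))/2)^(k+1) − ((b − √(b²+4c))/2)^(k+1) ). -/
/-! By Pascal's rule the sum `F k` satisfies `F (k + 2) = b F (k + 1) + c F k`, with `F 0 = 1`
and `F 1 = b`. If `α ≠ β` are the roots `(b ± √(b² + 4c)) / 2` of `X² = b X + c`, then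
`(α ^ (k + 1) - β ^ (k + 1)) / (α - β)` satisfies the same recurrence with the same initial
values. -/

open Finset

section BivariateFib

variable {R : Type*} [CommSemiring R] (b c : R)

def bivariateFibTerm (k i : ℕ) : R :=
  ((k - i).choose i : R) * b ^ (k - 2 * i) * c ^ i

def bivariateFib (k : ℕ) : R :=
  ∑ i ∈ range (k / 2 + 1), bivariateFibTerm b c k i

lemma bivariateFibTerm_eq_zero {k i : ℕ} (h : k / 2 < i) :
    bivariateFibTerm b c k i = 0 := by
  rw [bivariateFibTerm, Nat.choose_eq_zero_of_lt (by omega), Nat.cast_zero, zero_mul, zero_mul]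

lemma bivariateFib_eq_sum_range {k N : ℕ} (h : k / 2 < N) :
    bivariateFib b c k = ∑ i ∈ range N, bivariateFibTerm b c k i := by
  refine sum_subset (range_subset_range.mpr h) fun i _ hi => bivariateFibTerm_eq_zero b c ?_
  simpa using hi

lemma bivariateFibTerm_zero (k : ℕ) : bivariateFibTerm b c k 0 = b ^ k := by
  simp [bivariateFibTerm]

/-- When `k ≤ 2 i` the exponent `k + 1 - 2 (i + 1)` is truncated, but then the binomial
coefficient in front of it vanishes. -/
lemma bivariateFibTerm_add_two_succ {k i : ℕ} (hi : i ≤ k) :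
    bivariateFibTerm b c (k + 2) (i + 1) =
      b * bivariateFibTerm b c (k + 1) (i + 1) + c * bivariateFibTerm b c k i := by
  have hb : ((k - i).choose (i + 1) : R) * b ^ (k - 2 * i) =
      b * ((k - i).choose (i + 1) * b ^ (k + 1 - 2 * (i + 1))) := by
    by_cases hki : 2 * i < k
    · rw [show k - 2 * i = k + 1 - 2 * (i + 1) + 1 by omega, pow_succ]
      ring
    · rw [Nat.choose_eq_zero_of_lt (by omega)]
      simp
  simp only [bivariateFibTerm]
  rw [show k + 2 - (i + 1) = k - i + 1 by omega, show k + 1 - (i + 1) = k - i by omega,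
    show k + 2 - 2 * (i + 1) = k - 2 * i by omega, Nat.choose_succ_succ', Nat.cast_add, add_mul,
    add_mul, hb]
  ring

lemma bivariateFib_zero : bivariateFib b c 0 = 1 := by
  simp [bivariateFib, bivariateFibTerm]

lemma bivariateFib_one : bivariateFib b c 1 = b := by
  simp [bivariateFib, bivariateFibTerm]

lemma bivariateFib_add_two (k : ℕ) :
    bivariateFib b c (k + 2) = b * bivariateFib b c (k + 1) + c * bivariateFib b c k := by
  rw [bivariateFib_eq_sum_range b c (N := k + 2) (by omega),
    bivariateFib_eq_sum_range b c (k := k + 1) (N := k + 2) (by omega),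
    bivariateFib_eq_sum_range b c (N := k + 1) (by omega), sum_range_succ',
    sum_range_succ' _ (k + 1), sum_congr rfl fun i hi =>
      bivariateFibTerm_add_two_succ b c (Nat.lt_succ_iff.mp (mem_range.mp hi)),
    sum_add_distrib, mul_add, mul_sum, mul_sum, bivariateFibTerm_zero, bivariateFibTerm_zero]
  ring

end BivariateFib

theorem bivariateFib_eq_div_sub {K : Type*} [Field K] {b c α β : K} (hαβ : α ≠ β)
    (hsum : α + β = b) (hprod : α * β = -c) (k : ℕ) :
    bivariateFib b c k = (α ^ (k + 1) - β ^ (k + 1)) / (α - β) := by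
  have hne : α - β ≠ 0 := sub_ne_zero.mpr hαβ
  induction k using Nat.twoStepInduction with
  | zero => rw [bivariateFib_zero, zero_add, pow_one, pow_one, div_self hne]
  | one => rw [bivariateFib_one, eq_div_iff hne, ← hsum]; ring
  | more k ih₀ ih₁ =>
    rw [bivariateFib_add_two, ih₀, ih₁, ← hsum, show c = -(α * β) by rw [hprod, neg_neg]]
    field_simp
    ring

theorem stmt_0 (b c : ℝ) (h : b ^ 2 + 4 * c > 0) (k : ℕ) :
    ∑ i ∈ Finset.range (k / 2 + 1), (Nat.choose (k - i) i : ℝ) * b ^ (k - 2 * i) * c ^ i =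
      (1 / Real.sqrt (b ^ 2 + 4 * c)) *
        (((b + Real.sqrt (b ^ 2 + 4 * c)) / 2) ^ (k + 1) -
          ((b - Real.sqrt (b ^ 2 + 4 * c)) / 2) ^ (k + 1)) := by
  set s := Real.sqrt (b ^ 2 + 4 * c)
  have hs : s ≠ 0 := (Real.sqrt_pos.mpr h).ne'
  have hs2 : s ^ 2 = b ^ 2 + 4 * c := Real.sq_sqrt h.le
  have binet := bivariateFib_eq_div_sub (b := b) (c := c) (α := (b + s) / 2) (β := (b - s) / 2)
    (fun heq => hs (by linarith)) (by ring) (by linear_combination -hs2 / 4) k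
  rw [show (b + s) / 2 - (b - s) / 2 = s by ring] at binet
  rw [one_div_mul_eq_div]
  exact binet
end

section
/- Let R be the 2×2 real matrix with rows (b, c) and (1, 0). Then for every k ≥ 2, R^k equals the 2×2 matrix whose (1,1) entry is Σ_{i=0}^{⌊k/2⌋} C(k-i, i) b^{k-2i} c^i, whose (1,2) entry is Σ_{i=0}^{⌊(k-1)/2⌋} C(k-i-1, i) b^{k-2i-1} c^{i+1}, whose (2,1) entry is Σ_{i=0}^{⌊(k-1)/2⌋} C(k-i-1, i) b^{k-2i-1} c^i, and whose (2,2) entry is Σ_{i=0}^{⌊(k-2)/2⌋} C(k-i-2, i) b^{k-2i-2} c^{i+1}. -/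
noncomputable def Saux (b c : ℝ) (n : ℕ) : ℝ :=
  ∑ i ∈ Finset.range (n / 2 + 1), (Nat.choose (n - i) i : ℝ) * b ^ (n - 2 * i) * c ^ i

lemma Saux_zero (b c : ℝ) : Saux b c 0 = 1 := by simp [Saux]

lemma Saux_one (b c : ℝ) : Saux b c 1 = b := by simp [Saux]

lemma Saux_rec (b c : ℝ) (n : ℕ) :
    Saux b c (n + 2) = b * Saux b c (n + 1) + c * Saux b c n := by
  unfold Saux
  rw [show (n + 2) / 2 + 1 = (n / 2 + 1) + 1 from by omega]
  rw [Finset.sum_range_succ']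
  have split : ∀ j ∈ Finset.range (n / 2 + 1),
      (Nat.choose (n + 2 - (j+1)) (j+1) : ℝ) * b ^ (n + 2 - 2 * (j+1)) * c ^ (j+1)
        = (Nat.choose (n - j) (j+1) : ℝ) * b ^ (n - 2 * j) * c ^ (j+1)
          + (Nat.choose (n - j) j : ℝ) * b ^ (n - 2 * j) * c ^ (j+1) := by
    intro j hj
    simp only [Finset.mem_range] at hj
    have h1 : n + 2 - (j+1) = (n - j) + 1 := by omega
    have h2 : n + 2 - 2 * (j+1) = n - 2 * j := by omega
    rw [h1, h2, Nat.choose_succ_succ]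
    push_cast
    ring
  rw [Finset.sum_congr rfl split, Finset.sum_add_distrib]
  have e0 : (Nat.choose (n + 2 - 0) 0 : ℝ) * b ^ (n + 2 - 2 * 0) * c ^ 0 = b ^ (n + 2) := by
    simp
  rw [e0]
  -- RHS: b * S(n+1)
  have hb : b * ∑ i ∈ Finset.range ((n+1) / 2 + 1),
      (Nat.choose (n + 1 - i) i : ℝ) * b ^ (n + 1 - 2 * i) * c ^ i
      = (∑ j ∈ Finset.range (n / 2 + 1),
          (Nat.choose (n - j) (j+1) : ℝ) * b ^ (n - 2 * j) * c ^ (j+1)) + b ^ (n + 2) := by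
    rw [Finset.sum_range_succ', mul_add]
    congr 1
    · rw [Finset.mul_sum]
      rw [← Finset.sum_subset (Finset.range_subset_range.2 (show (n+1)/2 ≤ n/2 + 1 from by omega))]
      · apply Finset.sum_congr rfl
        intro j hj
        simp only [Finset.mem_range] at hj
        have h1 : n + 1 - (j+1) = n - j := by omega
        have h2 : n + 1 - 2 * (j+1) = n - 2 * j - 1 := by omega
        have h3 : 2 * j + 1 ≤ n := by omega
        rw [h1, h2, show n - 2*j = (n - 2*j - 1) + 1 from by omega]
        push_cast
        ring
      · intro j hj hj'
        simp only [Finset.mem_range] at hj hj'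
        have : n - j < j + 1 := by omega
        rw [Nat.choose_eq_zero_of_lt this]
        simp
    · simp [pow_succ']
  rw [hb]
  have hc : c * ∑ i ∈ Finset.range (n / 2 + 1),
      (Nat.choose (n - i) i : ℝ) * b ^ (n - 2 * i) * c ^ i
      = ∑ j ∈ Finset.range (n / 2 + 1),
          (Nat.choose (n - j) j : ℝ) * b ^ (n - 2 * j) * c ^ (j+1) := by
    rw [Finset.mul_sum]
    apply Finset.sum_congr rfl
    intro j _
    ring
  rw [hc]
  ring

lemma pow_eq (b c : ℝ) (n : ℕ) :
    (!![b, c; 1, 0] : Matrix (Fin 2) (Fin 2) ℝ) ^ (n + 2)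
      = !![Saux b c (n + 2), c * Saux b c (n + 1);
           Saux b c (n + 1), c * Saux b c n] := by
  induction n with
  | zero =>
      rw [pow_two, Matrix.mul_fin_two]
      have h2 : Saux b c 2 = b * b + c := by
        rw [show (2:ℕ) = 0 + 2 from rfl, Saux_rec, Saux_zero, Saux_one]; ring
      rw [h2, Saux_one, Saux_zero]
      ext i j
      fin_cases i <;> fin_cases j <;> simp <;> ring
  | succ m ih =>
      rw [show m + 1 + 1 = m + 2 from rfl, show m + 1 + 2 = (m + 2) + 1 from rfl,
        pow_succ, ih]
      have h3 : Saux b c (m + 2 + 1) = b * Saux b c (m + 2) + c * Saux b c (m + 1) :=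
        Saux_rec b c (m + 1)
      ext i j
      fin_cases i <;> fin_cases j <;>
        simp [Matrix.mul_apply, Fin.sum_univ_succ, h3] <;>
        first
          | ring1
          | (rw [Saux_rec b c m]; ring1)

theorem stmt_1 (b c : ℝ) (k : ℕ) (hk : 2 ≤ k) :
    (!![b, c; 1, 0] : Matrix (Fin 2) (Fin 2) ℝ) ^ k =
      !![∑ i ∈ Finset.range (k / 2 + 1), (Nat.choose (k - i) i : ℝ) * b ^ (k - 2 * i) * c ^ i,
         ∑ i ∈ Finset.range ((k - 1) / 2 + 1),
           (Nat.choose (k - i - 1) i : ℝ) * b ^ (k - 2 * i - 1) * c ^ (i + 1);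
         ∑ i ∈ Finset.range ((k - 1) / 2 + 1),
           (Nat.choose (k - i - 1) i : ℝ) * b ^ (k - 2 * i - 1) * c ^ i,
         ∑ i ∈ Finset.range ((k - 2) / 2 + 1),
           (Nat.choose (k - i - 2) i : ℝ) * b ^ (k - 2 * i - 2) * c ^ (i + 1)] := by
  obtain ⟨n, rfl⟩ : ∃ n, k = n + 2 := ⟨k - 2, by omega⟩
  rw [pow_eq]
  have e11 : Saux b c (n + 2)
      = ∑ i ∈ Finset.range ((n + 2) / 2 + 1),
          (Nat.choose (n + 2 - i) i : ℝ) * b ^ (n + 2 - 2 * i) * c ^ i := rfl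
  have e12 : c * Saux b c (n + 1)
      = ∑ i ∈ Finset.range ((n + 2 - 1) / 2 + 1),
          (Nat.choose (n + 2 - i - 1) i : ℝ) * b ^ (n + 2 - 2 * i - 1) * c ^ (i + 1) := by
    unfold Saux
    rw [Finset.mul_sum, show n + 2 - 1 = n + 1 from rfl]
    apply Finset.sum_congr rfl
    intro i _
    rw [show n + 2 - i - 1 = n + 1 - i from by omega,
        show n + 2 - 2 * i - 1 = n + 1 - 2 * i from by omega]
    ring
  have e21 : Saux b c (n + 1)
      = ∑ i ∈ Finset.range ((n + 2 - 1) / 2 + 1),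
          (Nat.choose (n + 2 - i - 1) i : ℝ) * b ^ (n + 2 - 2 * i - 1) * c ^ i := by
    unfold Saux
    rw [show n + 2 - 1 = n + 1 from rfl]
    apply Finset.sum_congr rfl
    intro i _
    rw [show n + 2 - i - 1 = n + 1 - i from by omega,
        show n + 2 - 2 * i - 1 = n + 1 - 2 * i from by omega]
  have e22 : c * Saux b c n
      = ∑ i ∈ Finset.range ((n + 2 - 2) / 2 + 1),
          (Nat.choose (n + 2 - i - 2) i : ℝ) * b ^ (n + 2 - 2 * i - 2) * c ^ (i + 1) := by
    unfold Saux
    rw [Finset.mul_sum, show n + 2 - 2 = n from rfl]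
    apply Finset.sum_congr rfl
    intro i _
    rw [show n + 2 - i - 2 = n - i from by omega,
        show n + 2 - 2 * i - 2 = n - 2 * i from by omega]
    ring
  rw [e11, e12, e21, e22]
end

section
/- Let B be the block matrix [I_n, −2ηA; 2ηAᵀ, I_m] with η‖A‖ < 1/2. If u = (u₁, u₂) is an eigenvector of B with eigenvalue μ′ (so 2ηA u₂ = (1−μ′)u₁ and 2ηAᵀu₁ = (μ′−1)u₂), and u is simultaneously an eigenvector of T = B² + 4C with eigenvalue μ, then 1 − μ = −(1 − μ′)². -/
open Matrix
open scoped Matrix.Norms.L2Operator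

/-! Since `2C = 1 - B`, we have `T = B² + 2(1 - B) = 1 + (1 - B)²`, so an eigenvector of `B` with
eigenvalue `μ'` is an eigenvector of `T` with eigenvalue `1 + (1 - μ')²`. -/

section

variable {R ι κ : Type*} [CommRing R] [DecidableEq ι] [DecidableEq κ]

theorem Matrix.two_smul_fromBlocks_skew_eq_one_sub (A : Matrix ι κ R) (η : R) :
    (2 : R) • fromBlocks 0 (η • A) ((-η) • Aᵀ) 0 =
      1 - fromBlocks 1 ((-2 * η) • A) ((2 * η) • Aᵀ) 1 := by
  rw [← fromBlocks_one, fromBlocks_smul, sub_eq_add_neg, fromBlocks_neg, fromBlocks_add]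
  congr 1 <;> module

theorem Matrix.mulVec_one_add_one_sub_sq_of_mulVec_eq_smul [Fintype ι]
    {M : Matrix ι ι R} {u : ι → R} {a : R} (hu : M *ᵥ u = a • u) : (1 + (1 - M) ^ 2) *ᵥ u = (1 + (1 - a) ^ 2) • u := by
  have h₁ : (1 - M) *ᵥ u = (1 - a) • u := by
    rw [sub_mulVec, one_mulVec, hu, sub_smul, one_smul]
  rw [add_mulVec, one_mulVec, sq, ← mulVec_mulVec, h₁, mulVec_smul, h₁, smul_smul, add_smul,
    one_smul, sq]

end

theorem sq_add_two_smul_one_sub {R S : Type*} [CommRing R] [Ring S] [Algebra R S] (B : S) :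
    B ^ 2 + (2 : R) • (1 - B) = 1 + (1 - B) ^ 2 := by
  rw [two_smul]
  noncomm_ring

theorem stmt_10_general (n m : ℕ) (A : Matrix (Fin n) (Fin m) ℝ) (η : ℝ)
    (B : Matrix (Fin n ⊕ Fin m) (Fin n ⊕ Fin m) ℝ)
    (hB : B = Matrix.fromBlocks 1 ((-2 * η) • A) ((2 * η) • Aᵀ) 1)
    (C : Matrix (Fin n ⊕ Fin m) (Fin n ⊕ Fin m) ℝ)
    (hC : C = Matrix.fromBlocks 0 (η • A) ((-η) • Aᵀ) 0)
    (u : Fin n ⊕ Fin m → ℂ) (hu : u ≠ 0) (μ' μ : ℂ)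
    (huB : (B.map (Complex.ofReal)).mulVec u = μ' • u)
    (huT : ((B ^ 2 + (4 : ℝ) • C).map (Complex.ofReal)).mulVec u = μ • u) :
    1 - μ = -(1 - μ') ^ 2 := by
  have hT : B ^ 2 + (4 : ℝ) • C = 1 + (1 - B) ^ 2 := by
    rw [show (4 : ℝ) = 2 * 2 by norm_num, mul_smul, hC, two_smul_fromBlocks_skew_eq_one_sub,
      ← hB, sq_add_two_smul_one_sub]
  have hTc : (B ^ 2 + (4 : ℝ) • C).map Complex.ofReal = 1 + (1 - B.map Complex.ofReal) ^ 2 := by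
    change Complex.ofRealHom.mapMatrix _ = 1 + (1 - Complex.ofRealHom.mapMatrix B) ^ 2
    rw [hT, map_add, map_pow, map_sub, map_one]
  rw [hTc, mulVec_one_add_one_sub_sq_of_mulVec_eq_smul huB] at huT
  have hμ : μ = 1 + (1 - μ') ^ 2 := (smul_left_injective ℂ hu huT).symm
  rw [hμ]
  ring

theorem stmt_10 (n m : ℕ) (A : Matrix (Fin n) (Fin m) ℝ) (η : ℝ)
    (hηA : η * ‖A‖ < 1 / 2)
    (B : Matrix (Fin n ⊕ Fin m) (Fin n ⊕ Fin m) ℝ)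
    (hB : B = Matrix.fromBlocks 1 ((-2 * η) • A) ((2 * η) • Aᵀ) 1)
    (C : Matrix (Fin n ⊕ Fin m) (Fin n ⊕ Fin m) ℝ)
    (hC : C = Matrix.fromBlocks 0 (η • A) ((-η) • Aᵀ) 0)
    (u : Fin n ⊕ Fin m → ℂ) (hu : u ≠ 0) (μ' μ : ℂ)
    (huB : (B.map (Complex.ofReal)).mulVec u = μ' • u)
    (huT : ((B ^ 2 + (4 : ℝ) • C).map (Complex.ofReal)).mulVec u = μ • u) :
    1 - μ = -(1 - μ') ^ 2 :=
  stmt_10_general n m A η B hB C hC u hu μ' μ huB huT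
end

section
/- Suppose the constrained zero-sum game xᵀAy on Δ_n × Δ_m has value 0 and possesses an interior Nash equilibrium (x_i*, y_i*) with all coordinates strictly positive. Then a pair (x, y) ∈ Δ_n × Δ_m is a Nash equilibrium if and only if Aᵀx = 0 and Ay = 0; i.e., the set of Nash equilibria equals (Δ_n ∩ N(Aᵀ)) × (Δ_m ∩ N(A)). -/
open Matrix

def IsNE {n m : ℕ} (A : Matrix (Fin n) (Fin m) ℝ) (xs : Fin n → ℝ) (ys : Fin m → ℝ) : Prop :=
  xs ∈ stdSimplex ℝ (Fin n) ∧ ys ∈ stdSimplex ℝ (Fin m) ∧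
    (∀ y ∈ stdSimplex ℝ (Fin m), xs ⬝ᵥ A.mulVec y ≤ xs ⬝ᵥ A.mulVec ys) ∧
    (∀ x ∈ stdSimplex ℝ (Fin n), xs ⬝ᵥ A.mulVec ys ≤ x ⬝ᵥ A.mulVec ys)

lemma single_mem_std {k : ℕ} (i : Fin k) : Pi.single i (1:ℝ) ∈ stdSimplex ℝ (Fin k) := by
  constructor
  · intro j
    by_cases h : j = i <;> simp [Pi.single_apply, h]
  · simp [Finset.sum_pi_single']

lemma key {k : ℕ} (a b : Fin k → ℝ) (ha : ∀ i, 0 < a i) (hb : ∀ i, 0 ≤ b i)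
    (h : a ⬝ᵥ b = 0) : b = 0 := by
  funext i
  have h0 := (Finset.sum_eq_zero_iff_of_nonneg
    (fun i _ => mul_nonneg (ha i).le (hb i))).mp h i (Finset.mem_univ i)
  have : a i ≠ 0 := (ha i).ne'
  simpa [this] using h0

theorem stmt_18 (n m : ℕ) (A : Matrix (Fin n) (Fin m) ℝ)
    (xi : Fin n → ℝ) (yi : Fin m → ℝ)
    (hNE : IsNE A xi yi)
    (hint : (∀ i, 0 < xi i) ∧ (∀ j, 0 < yi j))
    (hval : xi ⬝ᵥ A.mulVec yi = 0) :
    ∀ x ∈ stdSimplex ℝ (Fin n), ∀ y ∈ stdSimplex ℝ (Fin m),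
      (IsNE A x y ↔ Matrix.vecMul x A = 0 ∧ A.mulVec y = 0) := by
  obtain ⟨hxi, hyi, hmax, hmin⟩ := hNE
  obtain ⟨hxint, hyint⟩ := hint
  -- A.mulVec yi = 0
  have hAyi : A.mulVec yi = 0 := by
    refine key xi _ hxint (fun i => ?_) hval
    have := hmin (Pi.single i 1) (single_mem_std i)
    simpa [hval, single_dotProduct] using this
  -- vecMul xi A = 0
  have hxiA : Matrix.vecMul xi A = 0 := by
    have hle : ∀ j, Matrix.vecMul xi A j ≤ 0 := by
      intro j
      have := hmax (Pi.single j 1) (single_mem_std j)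
      rw [Matrix.dotProduct_mulVec] at this
      simpa [hval, dotProduct_single] using this
    have hdp : yi ⬝ᵥ (fun j => -(Matrix.vecMul xi A j)) = 0 := by
      have : Matrix.vecMul xi A ⬝ᵥ yi = 0 := by
        rw [← Matrix.dotProduct_mulVec]; exact hval
      rw [dotProduct_comm] at this
      simp only [dotProduct, mul_neg, ← Finset.sum_neg_distrib] at this ⊢
      simpa using this
    have := key yi _ hyint (fun j => neg_nonneg.mpr (hle j)) hdp
    funext j
    have := congrFun this j
    simpa [neg_eq_zero] using this
  intro x hx y hy
  constructor
  · rintro ⟨hxΔ, hyΔ, hmax', hmin'⟩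
    set v := x ⬝ᵥ A.mulVec y with hvdef
    have hv1 : v ≤ 0 := by
      have := hmin' xi hxi
      rw [Matrix.dotProduct_mulVec xi, hxiA] at this
      simpa using this
    have hv2 : 0 ≤ v := by
      have := hmax' yi hyi
      rw [hAyi] at this
      simpa using this
    have hv : v = 0 := le_antisymm hv1 hv2
    constructor
    · have hle : ∀ j, Matrix.vecMul x A j ≤ 0 := by
        intro j
        have := hmax' (Pi.single j 1) (single_mem_std j)
        rw [Matrix.dotProduct_mulVec] at this
        simpa [hv, dotProduct_single] using this
      have hdp : yi ⬝ᵥ (fun j => -(Matrix.vecMul x A j)) = 0 := by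
        have h0 : Matrix.vecMul x A ⬝ᵥ yi = 0 := by
          rw [← Matrix.dotProduct_mulVec, hAyi]; simp
        rw [dotProduct_comm] at h0
        simp only [dotProduct, mul_neg, ← Finset.sum_neg_distrib] at h0 ⊢
        simpa using h0
      have := key yi _ hyint (fun j => neg_nonneg.mpr (hle j)) hdp
      funext j
      have := congrFun this j
      simpa [neg_eq_zero] using this
    · refine key xi _ hxint (fun i => ?_) ?_
      · have := hmin' (Pi.single i 1) (single_mem_std i)
        simpa [hv, single_dotProduct] using this
      · rw [Matrix.dotProduct_mulVec, hxiA]; simp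
  · rintro ⟨hxA, hAy⟩
    refine ⟨hx, hy, fun y' hy' => ?_, fun x' hx' => ?_⟩
    · rw [Matrix.dotProduct_mulVec, Matrix.dotProduct_mulVec, hxA]; simp
    · rw [hAy]; simp
end
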